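/- Let P, Q, R, S be a pqrs-quad. Then the constraint Q(iπ/2) − μ·P(iπ/2) + R(iπ/2) = 0 holds if and only if the A-relations hold, i.e. for every w ∈ ℂ: P(iπ−w) = −e^{iℓπ}·e^{2(1−ℓ)w}·P(w); Q(iπ−w) = e^{iℓπ}·e^{−2ℓw}·(μ·P(w) + e^{2w}·R(w)); R(iπ−w) = e^{iℓπ}·e^{2(1−ℓ)w}·(μ·e^{2w}·P(w) + Q(w)); S(iπ−w) = −e^{iℓπ}·e^{−2ℓw}·(μ·(μ·e^{2w}·P(w) + Q(w)) + e^{2w}·(μ·e^{2w}·R(w) + S(w))). (The constraint is q(i) − μ·p(i) + r(i) = 0 at z = i, since e^{iπ/2} = i.) -/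

import Mathlib

noncomputable def ipi : ℂ := (Real.pi : ℂ) * Complex.I

/-!
Write `A(w)` for the coefficient matrix of the pqrs system solved for the derivatives, so that
`v = (P, Q, R, S)` satisfies `v' = A(w) v`. Both `w ↦ v(iπ - w)` and the right-hand sides of the
A-relations solve the reflected system `X' = -A(iπ - w) X`; for the latter this is a direct
computation, valid for any constant in place of `e^{iℓπ}`. Their difference therefore vanishes
identically as soon as it vanishes at the fixed point `iπ/2` of the reflection (uniqueness for
linear ODEs, by Grönwall along a segment), and there `e^{iℓπ}` is exactly the normalisation
that turns this into the constraint `Q - μP + R = 0`.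
-/

open Set Matrix

theorem eq_zero_of_hasDerivAt_of_norm_le_mul_norm {E : Type*} [NormedAddCommGroup E]
    [NormedSpace ℂ E] {F F' : ℂ → E} {K : ℂ → ℝ} (hK : Continuous K)
    (hF : ∀ z, HasDerivAt F (F' z) z) (hbound : ∀ z, ‖F' z‖ ≤ K z * ‖F z‖)
    {z₀ : ℂ} (h₀ : F z₀ = 0) (z : ℂ) : F z = 0 := by
  set γ : ℝ → ℂ := fun t => z₀ + t * (z - z₀)
  have hγ (t : ℝ) : HasDerivAt γ (z - z₀) t :=
    (((hasDerivAt_id t).ofReal_comp.mul_const (z - z₀)).const_add z₀).congr_deriv (by simp)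
  have hFγ (t : ℝ) : HasDerivAt (F ∘ γ) ((z - z₀) • F' (γ t)) t :=
    (hF (γ t)).scomp t (hγ t)
  obtain ⟨C, hC⟩ := (isCompact_Icc (a := (0 : ℝ)) (b := 1)).exists_bound_of_continuousOn
    (hK.comp (by fun_prop : Continuous γ)).continuousOn
  have hzero := eq_zero_of_abs_deriv_le_mul_abs_self_of_eq_zero_right (K := ‖z - z₀‖ * C)
    (fun t _ => (hFγ t).continuousAt.continuousWithinAt) (fun t _ => (hFγ t).hasDerivWithinAt)
    (by simpa [γ] using h₀) (fun t ht => ?_) 1 (right_mem_Icc.2 zero_le_one)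
  · simpa [γ] using hzero
  · rw [norm_smul, mul_assoc]
    gcongr
    calc ‖F' (γ t)‖ ≤ K (γ t) * ‖F (γ t)‖ := hbound _
      _ ≤ C * ‖F (γ t)‖ := by
        gcongr
        exact (le_abs_self _).trans (hC t (Ico_subset_Icc_self ht))

theorem Matrix.eq_zero_of_hasDerivAt_mulVec {n : Type*} [Fintype n] {M : ℂ → Matrix n n ℂ}
    (hM : Continuous M) {v : ℂ → n → ℂ} (hv : ∀ z, HasDerivAt v (M z *ᵥ v z) z)
    {z₀ : ℂ} (h₀ : v z₀ = 0) (z : ℂ) : v z = 0 := by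
  let := Matrix.linftyOpNormedAddCommGroup (m := n) (n := n) (α := ℂ)
  exact eq_zero_of_hasDerivAt_of_norm_le_mul_norm (continuous_norm.comp hM) hv
    (fun z => linfty_opNorm_mulVec _ _) h₀ z

open Complex

namespace Complex

theorem exp_two_mul_eq_sq (w : ℂ) : exp (2 * w) = exp w ^ 2 := by
  simpa using exp_nat_mul w 2

theorem hasDerivAt_exp_const_mul (a w : ℂ) :
    HasDerivAt (fun w => exp (a * w)) (a * exp (a * w)) w :=
  ((hasDerivAt_id w).const_mul a).cexp.congr_deriv (by simp [mul_comm])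

end Complex

theorem exp_ipi : exp ipi = -1 := by
  rw [ipi, exp_pi_mul_I]

theorem exp_ipi_sub (w : ℂ) : exp (ipi - w) = -(exp w)⁻¹ := by
  rw [exp_sub, exp_ipi, div_eq_mul_inv, neg_one_mul]

structure IsPQRSQuad (ell lam mu : ℂ) (P Q R S : ℂ → ℂ) : Prop where
  differentiable_P : Differentiable ℂ P
  differentiable_Q : Differentiable ℂ Q
  differentiable_R : Differentiable ℂ R
  differentiable_S : Differentiable ℂ S
  eq_P : ∀ w : ℂ, exp w * deriv P w =
    (mu + (ell - 1) * exp w) * P w - Q w + exp (2 * w) * R w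
  eq_Q : ∀ w : ℂ, deriv Q w =
    exp w * ((lam - (ell + 1) * mu * exp w) * P w + mu * Q w + S w)
  eq_R : ∀ w : ℂ, exp w * deriv R w =
    -(lam + mu ^ 2) * P w + exp w * (2 * (ell - 1) - mu * exp w) * R w - S w
  eq_S : ∀ w : ℂ, exp w * deriv S w =
    -(lam + mu ^ 2) * Q w + exp (2 * w) * (lam - (ell + 1) * mu * exp w) * R w
      + ((ell - 1) * exp w - mu) * S w

def quadVec (P Q R S : ℂ → ℂ) (w : ℂ) : Fin 4 → ℂ := ![P w, Q w, R w, S w]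

noncomputable def pqrsMatrix (ell lam mu w : ℂ) : Matrix (Fin 4) (Fin 4) ℂ :=
  !![mu * (exp w)⁻¹ + (ell - 1), -(exp w)⁻¹, exp w, 0;
     exp w * (lam - (ell + 1) * mu * exp w), mu * exp w, 0, exp w;
     -(lam + mu ^ 2) * (exp w)⁻¹, 0, 2 * (ell - 1) - mu * exp w, -(exp w)⁻¹;
     0, -(lam + mu ^ 2) * (exp w)⁻¹, exp w * (lam - (ell + 1) * mu * exp w),
       ell - 1 - mu * (exp w)⁻¹]

theorem continuous_pqrsMatrix (ell lam mu : ℂ) : Continuous (pqrsMatrix ell lam mu) := by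
  unfold pqrsMatrix
  fun_prop (disch := exact fun w => exp_ne_zero w)

/-- The right-hand sides of the A-relations, with `c` in place of `exp (I * ell * π)`. -/
noncomputable def aTransform (ell mu c : ℂ) (P Q R S : ℂ → ℂ) (w : ℂ) : Fin 4 → ℂ :=
  ![-c * exp (2 * (1 - ell) * w) * P w,
    c * exp (-(2 * ell) * w) * (mu * P w + exp (2 * w) * R w),
    c * exp (2 * (1 - ell) * w) * (mu * exp (2 * w) * P w + Q w),
    -c * exp (-(2 * ell) * w) *
      (mu * (mu * exp (2 * w) * P w + Q w) + exp (2 * w) * (mu * exp (2 * w) * R w + S w))]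

theorem aTransform_ipi_div_two (ell mu : ℂ) (P Q R S : ℂ → ℂ) :
    aTransform ell mu (exp (I * ell * (Real.pi : ℂ))) P Q R S (ipi / 2) =
      ![P (ipi / 2), mu * P (ipi / 2) - R (ipi / 2), mu * P (ipi / 2) - Q (ipi / 2),
        mu ^ 2 * P (ipi / 2) - mu * Q (ipi / 2) - mu * R (ipi / 2) + S (ipi / 2)] := by
  have h₁ : exp (I * ell * (Real.pi : ℂ)) * exp (-(2 * ell) * (ipi / 2)) = 1 := by
    rw [← exp_add, ipi]; ring_nf; exact exp_zero
  have h₂ : exp (I * ell * (Real.pi : ℂ)) * exp (2 * (1 - ell) * (ipi / 2)) = -1 := by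
    rw [← exp_add, ← exp_ipi, ipi]; ring_nf
  have h₃ : exp (2 * (ipi / 2)) = -1 := by rw [mul_div_cancel₀ _ two_ne_zero, exp_ipi]
  simp only [aTransform, h₃, vecCons_inj, and_true]
  refine ⟨?_, ?_, ?_, ?_⟩
  · linear_combination -P (ipi / 2) * h₂
  · linear_combination (mu * P (ipi / 2) - R (ipi / 2)) * h₁
  · linear_combination (Q (ipi / 2) - mu * P (ipi / 2)) * h₂
  · linear_combination
      (mu ^ 2 * P (ipi / 2) - mu * Q (ipi / 2) - mu * R (ipi / 2) + S (ipi / 2)) * h₁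

namespace IsPQRSQuad

variable {ell lam mu : ℂ} {P Q R S : ℂ → ℂ}

theorem hasDerivAt_quadVec (h : IsPQRSQuad ell lam mu P Q R S) (w : ℂ) :
    HasDerivAt (quadVec P Q R S) (pqrsMatrix ell lam mu w *ᵥ quadVec P Q R S w) w := by
  have hx := exp_ne_zero w
  rw [hasDerivAt_pi]
  intro i
  fin_cases i <;>
    simp only [quadVec, pqrsMatrix, mulVec, dotProduct, Fin.sum_univ_four, of_apply, cons_val',
      cons_val, cons_val_zero, cons_val_one, cons_val_fin_one, Fin.reduceFinMk, Fin.mk_one,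
      Fin.zero_eta, Fin.isValue]
  · refine (h.differentiable_P w).hasDerivAt.congr_deriv ?_
    field_simp
    linear_combination h.eq_P w + R w * exp_two_mul_eq_sq w
  · exact (h.differentiable_Q w).hasDerivAt.congr_deriv (by linear_combination h.eq_Q w)
  · refine (h.differentiable_R w).hasDerivAt.congr_deriv ?_
    field_simp
    linear_combination h.eq_R w
  · refine (h.differentiable_S w).hasDerivAt.congr_deriv ?_
    field_simp
    linear_combination h.eq_S w + (lam - (ell + 1) * mu * exp w) * R w * exp_two_mul_eq_sq w

theorem hasDerivAt_aTransform (h : IsPQRSQuad ell lam mu P Q R S) (c w : ℂ) :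
    HasDerivAt (aTransform ell mu c P Q R S)
      (-(pqrsMatrix ell lam mu (ipi - w) *ᵥ aTransform ell mu c P Q R S w)) w := by
  have hv := hasDerivAt_pi.1 (h.hasDerivAt_quadVec w)
  have dP : HasDerivAt P _ w := hv 0
  have dQ : HasDerivAt Q _ w := hv 1
  have dR : HasDerivAt R _ w := hv 2
  have dS : HasDerivAt S _ w := hv 3
  have dE := hasDerivAt_exp_const_mul
  have hx := exp_ne_zero w
  have hE : exp (2 * (1 - ell) * w) = exp w ^ 2 * exp (-(2 * ell) * w) := by
    rw [← exp_two_mul_eq_sq, ← exp_add]; ring_nf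
  rw [hasDerivAt_pi]
  intro i
  fin_cases i <;> [
    refine (((dE _ w).const_mul (-c)).mul dP).congr_deriv ?_;
    refine (((dE _ w).const_mul c).mul ((dP.const_mul mu).add ((dE 2 w).mul dR))).congr_deriv ?_;
    refine (((dE _ w).const_mul c).mul
      ((((dE 2 w).const_mul mu).mul dP).add dQ)).congr_deriv ?_;
    refine (((dE _ w).const_mul (-c)).mul
      (((((dE 2 w).const_mul mu).mul dP).add dQ).const_mul mu |>.add
        ((dE 2 w).mul ((((dE 2 w).const_mul mu).mul dR).add dS)))).congr_deriv ?_] <;>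
  · simp only [quadVec, pqrsMatrix, aTransform, mulVec, dotProduct, Fin.sum_univ_four, of_apply,
      cons_val', cons_val, cons_val_zero, cons_val_one, cons_val_fin_one, Fin.reduceFinMk,
      Fin.mk_one, Fin.zero_eta, Fin.isValue, Pi.add_apply, Pi.mul_apply, Pi.neg_apply,
      exp_ipi_sub, inv_neg, inv_inv, hE, exp_two_mul_eq_sq]
    field_simp
    ring

theorem quadVec_ipi_sub_eq_aTransform (h : IsPQRSQuad ell lam mu P Q R S) {c w₀ : ℂ}
    (h₀ : quadVec P Q R S (ipi - w₀) = aTransform ell mu c P Q R S w₀) (w : ℂ) :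
    quadVec P Q R S (ipi - w) = aTransform ell mu c P Q R S w := by
  have hdiff (w : ℂ) : HasDerivAt
      (fun w => quadVec P Q R S (ipi - w) - aTransform ell mu c P Q R S w)
      (-pqrsMatrix ell lam mu (ipi - w) *ᵥ
        (quadVec P Q R S (ipi - w) - aTransform ell mu c P Q R S w)) w :=
    (((h.hasDerivAt_quadVec (ipi - w)).comp_const_sub ipi w).sub
      (h.hasDerivAt_aTransform c w)).congr_deriv
      (by rw [mulVec_sub, neg_mulVec, neg_mulVec, sub_neg_eq_add, neg_add_eq_sub])
  refine sub_eq_zero.1 (eq_zero_of_hasDerivAt_mulVec ?_ hdiff (sub_eq_zero.2 h₀) w)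
  exact ((continuous_pqrsMatrix ell lam mu).comp (continuous_sub_left ipi)).neg

theorem forall_quadVec_ipi_sub_eq_aTransform_iff (h : IsPQRSQuad ell lam mu P Q R S) :
    (∀ w, quadVec P Q R S (ipi - w) =
        aTransform ell mu (exp (I * ell * (Real.pi : ℂ))) P Q R S w) ↔
      Q (ipi / 2) - mu * P (ipi / 2) + R (ipi / 2) = 0 := by
  have hfix : ipi - ipi / 2 = ipi / 2 := sub_half ipi
  constructor
  · intro hrefl
    have hmid := hrefl (ipi / 2)
    rw [aTransform_ipi_div_two, hfix, quadVec] at hmid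
    linear_combination (vecCons_inj.1 (vecCons_inj.1 hmid).2).1
  · intro hcon
    refine h.quadVec_ipi_sub_eq_aTransform (w₀ := ipi / 2) ?_
    rw [aTransform_ipi_div_two, hfix, quadVec]
    simp only [vecCons_inj, true_and, and_true]
    refine ⟨?_, ?_, ?_⟩
    · linear_combination hcon
    · linear_combination hcon
    · linear_combination mu * hcon

end IsPQRSQuad

theorem statement_0 (ell lam mu : ℂ) (P Q R S : ℂ → ℂ)
    (hP : Differentiable ℂ P) (hQ : Differentiable ℂ Q)
    (hR : Differentiable ℂ R) (hS : Differentiable ℂ S)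
    (hsys1 : ∀ w : ℂ, Complex.exp w * deriv P w =
      (mu + (ell - 1) * Complex.exp w) * P w - Q w + Complex.exp (2 * w) * R w)
    (hsys2 : ∀ w : ℂ, deriv Q w =
      Complex.exp w * ((lam - (ell + 1) * mu * Complex.exp w) * P w + mu * Q w + S w))
    (hsys3 : ∀ w : ℂ, Complex.exp w * deriv R w =
      -(lam + mu ^ 2) * P w + Complex.exp w * (2 * (ell - 1) - mu * Complex.exp w) * R w - S w)
    (hsys4 : ∀ w : ℂ, Complex.exp w * deriv S w =
      -(lam + mu ^ 2) * Q w + Complex.exp (2 * w) * (lam - (ell + 1) * mu * Complex.exp w) * R w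
        + ((ell - 1) * Complex.exp w - mu) * S w) :
    (Q (ipi / 2) - mu * P (ipi / 2) + R (ipi / 2) = 0) ↔
    (∀ w : ℂ,
      P (ipi - w) = -Complex.exp (Complex.I * ell * (Real.pi : ℂ)) *
        Complex.exp (2 * (1 - ell) * w) * P w ∧
      Q (ipi - w) = Complex.exp (Complex.I * ell * (Real.pi : ℂ)) *
        Complex.exp (-(2 * ell) * w) * (mu * P w + Complex.exp (2 * w) * R w) ∧
      R (ipi - w) = Complex.exp (Complex.I * ell * (Real.pi : ℂ)) *
        Complex.exp (2 * (1 - ell) * w) * (mu * Complex.exp (2 * w) * P w + Q w) ∧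
      S (ipi - w) = -Complex.exp (Complex.I * ell * (Real.pi : ℂ)) *
        Complex.exp (-(2 * ell) * w) *
        (mu * (mu * Complex.exp (2 * w) * P w + Q w) +
          Complex.exp (2 * w) * (mu * Complex.exp (2 * w) * R w + S w))) := by
  refine (IsPQRSQuad.forall_quadVec_ipi_sub_eq_aTransform_iff
    ⟨hP, hQ, hR, hS, hsys1, hsys2, hsys3, hsys4⟩).symm.trans (forall_congr' fun w => ?_)
  simp only [quadVec, aTransform, vecCons_inj, and_true]
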